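/- arXiv:1903.03471 — 5 statements merged into one kernel-verified Lean document; each statement's English description precedes it below -/
import Mathlib

section
/- Let n ≥ 1 and m ≥ 2, let s_1,…,s_m, y_1,…,y_m ∈ ℝⁿ satisfy s_i^T y_i > 0 for all i ∈ {1,…,m}, and suppose that for some j ∈ {1,…,m−1} and some nonzero τ ∈ ℝ one has s_j = τ s_{j+1}. Then for every symmetric positive definite W ∈ ℝ^{n×n}, BFGS(W, (s_1,…,s_m), (y_1,…,y_m)) = BFGS(W, (s_1,…,s_{j−1}, s_{j+1},…,s_m), (y_1,…,y_{j−1}, y_{j+1},…,y_m)); that is, the BFGS matrix obtained using all m pairs equals the BFGS matrix obtained by skipping the pair (s_j, y_j). -/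
open Matrix

/-! For `U = I − ρ y sᵀ` with `ρ = 1/(sᵀy)` one has `sᵀU = 0`, so every vector parallel to `s`
lies in the left kernel of `U`. If `s_j = τ s_{j+1}`, then `U_j U_{j+1} = U_{j+1}` and
`U_{j+1}ᵀ s_j s_jᵀ U_{j+1} = 0`: the update with `(s_{j+1}, y_{j+1})` erases the one with
`(s_j, y_j)`, which can therefore be skipped. -/

/-- One BFGS update of the matrix `W` with the curvature pair `(s, y)`:
`W ← (I − ρ y sᵀ)ᵀ W (I − ρ y sᵀ) + ρ s sᵀ` with `ρ = 1/(sᵀy)`. -/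
noncomputable def bfgsUpdate {n : ℕ} (W : Matrix (Fin n) (Fin n) ℝ)
    (s y : Fin n → ℝ) : Matrix (Fin n) (Fin n) ℝ :=
  let ρ : ℝ := 1 / (s ⬝ᵥ y)
  let U : Matrix (Fin n) (Fin n) ℝ := 1 - ρ • Matrix.vecMulVec y s
  Uᵀ * W * U + ρ • Matrix.vecMulVec s s

/-- The BFGS matrix obtained from the initial matrix `W` by applying, in order
`j = 0, 1, …, m−1`, the BFGS update with the pair `(S j, Y j)`. -/
noncomputable def bfgs {n : ℕ} (W : Matrix (Fin n) (Fin n) ℝ) {m : ℕ}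
    (S Y : Fin m → Fin n → ℝ) : Matrix (Fin n) (Fin n) ℝ :=
  (List.finRange m).foldl (fun Wb j => bfgsUpdate Wb (S j) (Y j)) W

/-- The order-preserving map `Fin (m-1) → Fin m` that skips the index `j`. -/
def skipIdx {m : ℕ} (j : Fin m) (i : Fin (m - 1)) : Fin m :=
  if h : (i : ℕ) < (j : ℕ) then ⟨(i : ℕ), by omega⟩
  else ⟨(i : ℕ) + 1, by have := i.isLt; omega⟩

theorem vecMul_one_sub_smul_vecMulVec_self {ι K : Type*} [Fintype ι] [DecidableEq ι] [Field K]
    {s y : ι → K} (hsy : s ⬝ᵥ y ≠ 0) :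
    s ᵥ* (1 - (1 / (s ⬝ᵥ y)) • vecMulVec y s) = 0 := by
  rw [vecMul_sub, vecMul_one, vecMul_smul, vecMul_vecMulVec, smul_smul,
    one_div_mul_cancel hsy, one_smul, sub_self]

theorem bfgsUpdate_bfgsUpdate_of_parallel {n : ℕ} (W : Matrix (Fin n) (Fin n) ℝ)
    {s₁ y₁ s₂ y₂ : Fin n → ℝ} (h₂ : s₂ ⬝ᵥ y₂ ≠ 0) {τ : ℝ} (hs : s₁ = τ • s₂) :
    bfgsUpdate (bfgsUpdate W s₁ y₁) s₂ y₂ = bfgsUpdate W s₂ y₂ := by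
  set U₁ : Matrix (Fin n) (Fin n) ℝ := 1 - (1 / (s₁ ⬝ᵥ y₁)) • vecMulVec y₁ s₁
  set U₂ : Matrix (Fin n) (Fin n) ℝ := 1 - (1 / (s₂ ⬝ᵥ y₂)) • vecMulVec y₂ s₂
  have hker (a : Fin n → ℝ) : vecMulVec a s₁ * U₂ = 0 := by
    rw [vecMulVec_mul, hs, smul_vecMul, vecMul_one_sub_smul_vecMulVec_self h₂, smul_zero,
      vecMulVec_zero]
  have hU : U₁ * U₂ = U₂ := by
    rw [Matrix.sub_mul, Matrix.one_mul, Matrix.smul_mul, hker, smul_zero, sub_zero]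
  change U₂ᵀ * (U₁ᵀ * W * U₁ + (1 / (s₁ ⬝ᵥ y₁)) • vecMulVec s₁ s₁) * U₂ + _ = U₂ᵀ * W * U₂ + _
  congr 1
  calc U₂ᵀ * (U₁ᵀ * W * U₁ + (1 / (s₁ ⬝ᵥ y₁)) • vecMulVec s₁ s₁) * U₂
      = (U₁ * U₂)ᵀ * W * (U₁ * U₂) + (1 / (s₁ ⬝ᵥ y₁)) • (U₂ᵀ * (vecMulVec s₁ s₁ * U₂)) := by
        simp only [Matrix.mul_add, Matrix.add_mul, Matrix.transpose_mul, Matrix.mul_smul,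
          Matrix.smul_mul, Matrix.mul_assoc]
    _ = U₂ᵀ * W * U₂ := by rw [hU, hker, Matrix.mul_zero, smul_zero, add_zero]

theorem List.foldl_eraseIdx_of_absorbed {α β : Type*} (f : β → α → β) :
    ∀ (l : List α) (k : ℕ) (hk : k + 1 < l.length), (∀ c, f (f c l[k]) l[k + 1] = f c l[k + 1]) →
      ∀ b, (l.eraseIdx k).foldl f b = l.foldl f b
  | a :: c :: l, 0, _, h, b => by simpa using (congrArg (foldl f · l) (h b)).symm
  | a :: l, k + 1, hk, h, b => by
    simpa using foldl_eraseIdx_of_absorbed f l k (by simpa using hk) h (f b a)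

theorem map_skipIdx_finRange {m : ℕ} (j : Fin m) :
    (List.finRange (m - 1)).map (skipIdx j) = (List.finRange m).eraseIdx j := by
  apply List.ext_getElem
  · simp [List.length_eraseIdx, j.isLt]
  · intro i h₁ h₂
    by_cases hi : i < j <;> simp [List.getElem_eraseIdx, skipIdx, hi]

theorem bfgs_comp_skipIdx {n m : ℕ} (W : Matrix (Fin n) (Fin n) ℝ) (S Y : Fin m → Fin n → ℝ)
    (j : Fin m) :
    bfgs W (S ∘ skipIdx j) (Y ∘ skipIdx j) =
      ((List.finRange m).eraseIdx j).foldl (fun Wb i => bfgsUpdate Wb (S i) (Y i)) W := by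
  rw [← map_skipIdx_finRange, List.foldl_map]
  rfl

theorem bfgs_skip_parallel_consecutive_general {n m : ℕ}
    (S Y : Fin m → Fin n → ℝ)
    (hpos : ∀ i : Fin m, 0 < S i ⬝ᵥ Y i)
    (j : Fin m) (hj : (j : ℕ) + 1 < m)
    (τ : ℝ)
    (hs : S j = τ • S ⟨(j : ℕ) + 1, hj⟩)
    (W : Matrix (Fin n) (Fin n) ℝ) :
    bfgs W S Y = bfgs W (S ∘ skipIdx j) (Y ∘ skipIdx j) := by
  rw [bfgs_comp_skipIdx]
  refine (List.foldl_eraseIdx_of_absorbed _ _ j (by simpa using hj) (fun Wb => ?_) W).symm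
  simp only [List.getElem_finRange, Fin.cast_mk]
  exact bfgsUpdate_bfgsUpdate_of_parallel Wb (hpos _).ne' hs

theorem bfgs_skip_parallel_consecutive {n m : ℕ} (hn : 1 ≤ n) (hm : 2 ≤ m)
    (S Y : Fin m → Fin n → ℝ)
    (hpos : ∀ i : Fin m, 0 < S i ⬝ᵥ Y i)
    (j : Fin m) (hj : (j : ℕ) + 1 < m)
    (τ : ℝ) (hτ : τ ≠ 0)
    (hs : S j = τ • S ⟨(j : ℕ) + 1, hj⟩)
    (W : Matrix (Fin n) (Fin n) ℝ) (hW : W.PosDef) :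
    bfgs W S Y = bfgs W (S ∘ skipIdx j) (Y ∘ skipIdx j) :=
  bfgs_skip_parallel_consecutive_general S Y hpos j hj τ hs W
end

section
/- Let s_j, s_{j+1}, y_j, y_{j+1} ∈ ℝⁿ satisfy s_j^T y_j > 0 and s_{j+1}^T y_{j+1} > 0, and suppose s_j = τ s_{j+1} for some nonzero τ ∈ ℝ. Define ρ_i = 1/(s_i^T y_i), U_i = I − ρ_i y_i s_i^T and V_i = ρ_i s_i s_i^T for i ∈ {j, j+1}. Then for every matrix W ∈ ℝ^{n×n}, U_{j+1}^T U_j^T W U_j U_{j+1} + U_{j+1}^T V_j U_{j+1} + V_{j+1} = U_{j+1}^T W U_{j+1} + V_{j+1}; that is, performing the BFGS update corresponding to (s_j, y_j) followed by the update corresponding to (s_{j+1}, y_{j+1}) yields the same matrix as performing only the update corresponding to (s_{j+1}, y_{j+1}). -/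
/-!
Since `sᵀ (I - ρ y sᵀ) = sᵀ - ρ (sᵀ y) sᵀ = 0`, the row `s_{j+1}ᵀ`, and with it `s_jᵀ = τ s_{j+1}ᵀ`,
is annihilated by `U_{j+1}` from the right. The rank-one parts of `U_j` and `V_j` both have row
`s_jᵀ`, so `U_j U_{j+1} = U_{j+1}` and `V_j U_{j+1} = 0`: conjugating by `U_{j+1}` erases the
first update.
-/

open Matrix

section BFGS

variable {ι K : Type*} [Fintype ι] [Field K]

def bfgsProjection [DecidableEq ι] (s y : ι → K) : Matrix ι ι K :=
  1 - (1 / (s ⬝ᵥ y)) • vecMulVec y s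

def bfgsCorrection (s y : ι → K) : Matrix ι ι K :=
  (1 / (s ⬝ᵥ y)) • vecMulVec s s

theorem vecMul_bfgsProjection_self [DecidableEq ι] {s y : ι → K} (h : s ⬝ᵥ y ≠ 0) :
    s ᵥ* bfgsProjection s y = 0 := by
  rw [bfgsProjection, vecMul_sub, vecMul_one, vecMul_smul, vecMul_vecMulVec, smul_smul, one_div,
    inv_mul_cancel₀ h, one_smul, sub_self]

theorem bfgsProjection_mul_of_vecMul_eq_zero [DecidableEq ι] {s : ι → K} (y : ι → K)
    {M : Matrix ι ι K} (hM : s ᵥ* M = 0) : bfgsProjection s y * M = M := by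
  rw [bfgsProjection, Matrix.sub_mul, Matrix.one_mul, smul_mul, vecMulVec_mul, hM, vecMulVec_zero,
    smul_zero, sub_zero]

theorem bfgsCorrection_mul_of_vecMul_eq_zero {s : ι → K} (y : ι → K) {M : Matrix ι ι K}
    (hM : s ᵥ* M = 0) : bfgsCorrection s y * M = 0 := by
  rw [bfgsCorrection, smul_mul, vecMulVec_mul, hM, vecMulVec_zero, smul_zero]

end BFGS

theorem transpose_mul_mul_add_eq_of_mul_eq_self {ι κ R : Type*} [Fintype ι] [CommSemiring R]
    {U V W : Matrix ι ι R} {M : Matrix ι κ R} (hU : U * M = M) (hV : V * M = 0) :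
    Mᵀ * (Uᵀ * W * U) * M + Mᵀ * V * M = Mᵀ * W * M := by
  have hUt : Mᵀ * Uᵀ = Mᵀ := by rw [← transpose_mul, hU]
  calc Mᵀ * (Uᵀ * W * U) * M + Mᵀ * V * M = Mᵀ * Uᵀ * W * (U * M) + Mᵀ * (V * M) := by
        simp only [Matrix.mul_assoc]
    _ = Mᵀ * W * M := by rw [hUt, hU, hV, Matrix.mul_zero, add_zero]

theorem bfgs_update_overwrite_general {n : ℕ}
    (sj sj1 yj yj1 : Fin n → ℝ)
    (hj1 : 0 < sj1 ⬝ᵥ yj1)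
    (τ : ℝ) (hs : sj = τ • sj1) :
    ∀ W : Matrix (Fin n) (Fin n) ℝ,
      letI ρj : ℝ := 1 / (sj ⬝ᵥ yj)
      letI ρj1 : ℝ := 1 / (sj1 ⬝ᵥ yj1)
      letI Uj : Matrix (Fin n) (Fin n) ℝ := 1 - ρj • Matrix.vecMulVec yj sj
      letI Uj1 : Matrix (Fin n) (Fin n) ℝ := 1 - ρj1 • Matrix.vecMulVec yj1 sj1
      letI Vj : Matrix (Fin n) (Fin n) ℝ := ρj • Matrix.vecMulVec sj sj
      letI Vj1 : Matrix (Fin n) (Fin n) ℝ := ρj1 • Matrix.vecMulVec sj1 sj1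
      Uj1ᵀ * (Ujᵀ * W * Uj) * Uj1 + Uj1ᵀ * Vj * Uj1 + Vj1 = Uj1ᵀ * W * Uj1 + Vj1 := by
  intro W
  have hkill : sj ᵥ* bfgsProjection sj1 yj1 = 0 := by
    rw [hs, smul_vecMul, vecMul_bfgsProjection_self hj1.ne', smul_zero]
  exact congrArg (· + _) <| transpose_mul_mul_add_eq_of_mul_eq_self
    (bfgsProjection_mul_of_vecMul_eq_zero yj hkill)
    (bfgsCorrection_mul_of_vecMul_eq_zero yj hkill)

theorem bfgs_update_overwrite {n : ℕ}
    (sj sj1 yj yj1 : Fin n → ℝ)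
    (hj : 0 < sj ⬝ᵥ yj) (hj1 : 0 < sj1 ⬝ᵥ yj1)
    (τ : ℝ) (hτ : τ ≠ 0) (hs : sj = τ • sj1) :
    ∀ W : Matrix (Fin n) (Fin n) ℝ,
      letI ρj : ℝ := 1 / (sj ⬝ᵥ yj)
      letI ρj1 : ℝ := 1 / (sj1 ⬝ᵥ yj1)
      letI Uj : Matrix (Fin n) (Fin n) ℝ := 1 - ρj • Matrix.vecMulVec yj sj
      letI Uj1 : Matrix (Fin n) (Fin n) ℝ := 1 - ρj1 • Matrix.vecMulVec yj1 sj1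
      letI Vj : Matrix (Fin n) (Fin n) ℝ := ρj • Matrix.vecMulVec sj sj
      letI Vj1 : Matrix (Fin n) (Fin n) ℝ := ρj1 • Matrix.vecMulVec sj1 sj1
      Uj1ᵀ * (Ujᵀ * W * Uj) * Uj1 + Uj1ᵀ * Vj * Uj1 + Vj1 = Uj1ᵀ * W * Uj1 + Vj1 :=
  bfgs_update_overwrite_general sj sj1 yj yj1 hj1 τ hs
end

section
/- Let W ∈ ℝ^{n×n} be symmetric positive definite, let S = [s_1 ⋯ s_m] ∈ ℝ^{n×m} have linearly independent columns, let Y = [y_1 ⋯ y_m] ∈ ℝ^{n×m} satisfy s_i^T y_i > 0 for all i ∈ {1,…,m}, and let (s_0, y_0) ∈ ℝⁿ × ℝⁿ satisfy ρ_0 := 1/(s_0^T y_0) > 0 and s_0 = S τ for some τ ∈ ℝ^m. Then there exist A ∈ ℝ^{m×(m−1)} and b ∈ ℝ^{m−1} such that the matrix Ỹ := W^{−1} S [A 0] + y_0 [b^T 0] + Y (where [A 0] ∈ ℝ^{m×m} appends a zero column to A and [b^T 0] ∈ ℝ^{1×m} appends a zero entry to b^T) satisfies all of the following, with χ_0 :=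 1 + ρ_0 y_0^T W y_0: (a) s_i^T ỹ_j = s_i^T y_j for all 1 ≤ i ≤ j ≤ m, i.e., R̃ = R; (b) the vector in ℝ^m obtained by appending a zero entry to b equals −ρ_0 (S^T Y − R)^T τ; (c) (Ỹ − Y)^T W (Ỹ − Y) = (χ_0/ρ_0) [b;0][b;0]^T − [A 0]^T (S^T Y − R) − (S^T Y − R)^T [A 0], where [b;0] ∈ ℝ^m appends a zero entry to b. -/
/-!
Put `P = Sᵀ W⁻¹ S`, which is positive definite because `S` is injective, `L = SᵀY - R`, which is
strictly lower triangular, `u = Sᵀ y₀`, `ρ = ρ₀` and `b = -ρ Lᵀ τ`; the last entry of `b` vanishes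
because the last column of `L` does. With `K = 1 - ρ u τᵀ` one has `K L = L + u bᵀ`, and
`G = Kᵀ P⁻¹ K + ρ τ τᵀ` is positive definite (on `τ⊥` the matrix `K` is the identity). Two Cholesky
factorizations give a lower triangular `T` with `Tᵀ P⁻¹ T = G`. Then `A = P⁻¹ (T - K) L` makes
`Sᵀ (Ỹ - Y) = P A + u bᵀ = T L - L` strictly lower triangular, which is `R̃ = R`, and completing the
square gives `Aᵀ P A + Aᵀ K L + (K L)ᵀ A = Lᵀ (Tᵀ P⁻¹ T - Kᵀ P⁻¹ K) L = ρ Lᵀ τ τᵀ L = ρ⁻¹ b bᵀ`,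
which is (c) once `(Ỹ - Y)ᵀ W (Ỹ - Y)` is expanded.
-/

open Matrix

namespace Matrix

section

variable {ι κ μ : Type*} [Fintype ι] [DecidableEq ι]

theorem PosDef.transpose_one_sub_vecMulVec_mul_mul_add_smul_vecMulVec
    {Q : Matrix ι ι ℝ} (hQ : Q.PosDef) (u τ : ι → ℝ) {ρ : ℝ} (hρ : 0 < ρ) :
    ((1 - vecMulVec u τ)ᵀ * Q * (1 - vecMulVec u τ) + ρ • vecMulVec τ τ).PosDef := by
  set K := 1 - vecMulVec u τ
  have hKQK : (Kᵀ * Q * K).PosSemidef := by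
    simpa using hQ.posSemidef.conjTranspose_mul_mul_same K
  have hττ : (ρ • vecMulVec τ τ).PosSemidef := by
    simpa using (posSemidef_vecMulVec_self_star τ).smul hρ.le
  refine .of_dotProduct_mulVec_pos (hKQK.add hττ).isHermitian fun x hx => ?_
  have hquad : star x ⬝ᵥ ((Kᵀ * Q * K + ρ • vecMulVec τ τ) *ᵥ x) =
      star (K *ᵥ x) ⬝ᵥ (Q *ᵥ (K *ᵥ x)) + ρ * (τ ⬝ᵥ x) ^ 2 := by
    simp only [add_mulVec, dotProduct_add, smul_mulVec, vecMulVec_mulVec, star_trivial]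
    rw [← mulVec_mulVec, ← mulVec_mulVec, dotProduct_mulVec, vecMul_transpose, dotProduct_smul,
      dotProduct_smul, dotProduct_comm x τ]
    simp [smul_eq_mul, sq]
  rw [hquad]
  by_cases hτx : τ ⬝ᵥ x = 0
  · have hKx : K *ᵥ x = x := by simp [K, sub_mulVec, vecMulVec_mulVec, hτx]
    simpa [hKx, hτx] using hQ.dotProduct_mulVec_pos hx
  · exact add_pos_of_nonneg_of_pos (hQ.posSemidef.dotProduct_mulVec_nonneg _) (by positivity)

theorem complete_square_of_mul_add_eq {P : Matrix ι ι ℝ} (hPT : Pᵀ = P) (hP : IsUnit P.det)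
    {A F N : Matrix ι κ ℝ} (hA : P * A + F = N) :
    Aᵀ * P * A + Aᵀ * F + Fᵀ * A = Nᵀ * P⁻¹ * N - Fᵀ * P⁻¹ * F := by
  subst hA
  simp only [transpose_add, transpose_mul, hPT, Matrix.add_mul, Matrix.mul_add, Matrix.mul_assoc,
    nonsing_inv_mul_cancel_left P _ hP, mul_nonsing_inv_cancel_left P _ hP]
  abel

theorem transpose_mul_mul_inv_mul_add_vecMulVec [Fintype κ] {W : Matrix ι ι ℝ} (hWT : Wᵀ = W)
    (hW : IsUnit W.det) (S : Matrix ι κ ℝ) (A : Matrix κ μ ℝ) (y : ι → ℝ) (b : μ → ℝ) :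
    (W⁻¹ * S * A + vecMulVec y b)ᵀ * W * (W⁻¹ * S * A + vecMulVec y b) =
      Aᵀ * (Sᵀ * W⁻¹ * S) * A + Aᵀ * vecMulVec (Sᵀ *ᵥ y) b + vecMulVec b (Sᵀ *ᵥ y) * A +
        (y ⬝ᵥ W *ᵥ y) • vecMulVec b b := by
  have hWiT : (W⁻¹)ᵀ = W⁻¹ := by rw [transpose_nonsing_inv, hWT]
  simp only [transpose_add, transpose_mul, transpose_vecMulVec, hWiT, Matrix.add_mul,
    Matrix.mul_add]
  simp only [Matrix.mul_assoc, mul_nonsing_inv_cancel_left W _ hW, mul_vecMulVec, vecMulVec_mul,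
    ← mulVec_mulVec, vecMul_vecMul, mulVec_transpose]
  rw [mulVec_mulVec, nonsing_inv_mul W hW, one_mulVec, vecMulVec_mulVec, ← dotProduct_mulVec,
    op_smul_eq_smul, smul_vecMulVec]
  abel

end

section

variable {ι : Type*} [Fintype ι] [LinearOrder ι]

theorem BlockTriangular.mul_apply_eq_zero_of_le {T L : Matrix ι ι ℝ}
    (hT : T.BlockTriangular OrderDual.toDual) (hL : ∀ i j, i ≤ j → L i j = 0) {i j : ι}
    (hij : i ≤ j) : (T * L) i j = 0 := by
  rw [mul_apply]
  refine Finset.sum_eq_zero fun k _ => ?_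
  rcases lt_or_ge i k with hik | hki
  · rw [hT (show OrderDual.toDual k < OrderDual.toDual i from hik), zero_mul]
  · rw [hL k j (hki.trans hij), mul_zero]

variable [WellFoundedLT ι] [LocallyFiniteOrderBot ι]

theorem PosDef.exists_lower_triangular_mul_transpose_eq {A : Matrix ι ι ℝ} (hA : A.PosDef) :
    ∃ B : Matrix ι ι ℝ, B.BlockTriangular OrderDual.toDual ∧ B * Bᵀ = A := by
  have hD : ∀ i, 0 ≤ LDL.diagEntries hA i := fun i => by
    have := (hA.posSemidef.mul_mul_conjTranspose_same (LDL.lowerInv hA)).diag_nonneg (i := i)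
    rwa [← LDL.diag_eq_lowerInv_conj, LDL.diag, diagonal_apply_eq] at this
  have hlower : (LDL.lower hA).BlockTriangular OrderDual.toDual :=
    blockTriangular_inv_of_blockTriangular fun i j hij => LDL.lowerInv_triangular hA hij
  refine ⟨LDL.lower hA * diagonal fun i => √(LDL.diagEntries hA i),
    hlower.mul (blockTriangular_diagonal _), ?_⟩
  conv_rhs => rw [← LDL.lower_conj_diag hA]
  rw [transpose_mul, diagonal_transpose, ← conjTranspose_eq_transpose_of_trivial, Matrix.mul_assoc,
    ← Matrix.mul_assoc (diagonal _), diagonal_mul_diagonal, ← Matrix.mul_assoc]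
  congr 3
  ext i
  exact Real.mul_self_sqrt (hD i)

theorem PosDef.exists_lower_triangular_transpose_mul_eq {A : Matrix ι ι ℝ} (hA : A.PosDef) :
    ∃ C : Matrix ι ι ℝ, C.BlockTriangular OrderDual.toDual ∧ Cᵀ * C = A ∧ IsUnit C.det := by
  obtain ⟨B, hB, hBA⟩ := hA.inv.exists_lower_triangular_mul_transpose_eq
  have hBdet : IsUnit B.det := by
    have : B.det * B.det = (A⁻¹).det := by rw [← hBA, det_mul, det_transpose]
    exact isUnit_of_mul_isUnit_left (this ▸ hA.inv.det_pos.ne'.isUnit)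
  have := B.invertibleOfIsUnitDet hBdet
  refine ⟨B⁻¹, blockTriangular_inv_of_blockTriangular hB, ?_, isUnit_nonsing_inv_det B hBdet⟩
  rw [transpose_nonsing_inv, ← mul_inv_rev, hBA, nonsing_inv_nonsing_inv _ hA.det_pos.ne'.isUnit]

theorem PosDef.exists_lower_triangular_transpose_mul_mul_eq {Q G : Matrix ι ι ℝ} (hQ : Q.PosDef)
    (hG : G.PosDef) : ∃ T : Matrix ι ι ℝ, T.BlockTriangular OrderDual.toDual ∧ Tᵀ * Q * T = G := by
  obtain ⟨C, hC, rfl, hCdet⟩ := hQ.exists_lower_triangular_transpose_mul_eq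
  obtain ⟨D, hD, rfl, -⟩ := hG.exists_lower_triangular_transpose_mul_eq
  have := C.invertibleOfIsUnitDet hCdet
  refine ⟨C⁻¹ * D, (blockTriangular_inv_of_blockTriangular hC).mul hD, ?_⟩
  calc (C⁻¹ * D)ᵀ * (Cᵀ * C) * (C⁻¹ * D) = Dᵀ * ((C * C⁻¹)ᵀ * (C * C⁻¹)) * D := by
        simp only [transpose_mul, Matrix.mul_assoc]
    _ = Dᵀ * D := by simp [mul_nonsing_inv _ hCdet]

/-- The key equations in the coordinates `Sᵀ (Ỹ - Y) = P A + u bᵀ`, with `P = Sᵀ W⁻¹ S`. -/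
theorem PosDef.exists_key_equations {P L : Matrix ι ι ℝ} (hP : P.PosDef)
    (hL : ∀ i j, i ≤ j → L i j = 0) (u τ : ι → ℝ) {ρ : ℝ} (hρ : 0 < ρ) {b : ι → ℝ}
    (hb : b = (-ρ) • (Lᵀ *ᵥ τ)) :
    ∃ A : Matrix ι ι ℝ, (∀ j, (∀ i, L i j = 0) → ∀ i, A i j = 0) ∧
      (∀ i j, i ≤ j → (P * A + vecMulVec u b) i j = 0) ∧
      Aᵀ * P * A + Aᵀ * vecMulVec u b + vecMulVec b u * A + Aᵀ * L + Lᵀ * A =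
        ρ⁻¹ • vecMulVec b b := by
  have hPT : Pᵀ = P := by simpa using hP.isHermitian.eq
  have hPdet : IsUnit P.det := hP.det_pos.ne'.isUnit
  set K := 1 - vecMulVec (ρ • u) τ
  have hKL : K * L = L + vecMulVec u b := by
    simp only [K, hb, Matrix.sub_mul, Matrix.one_mul, smul_vecMulVec, Matrix.smul_mul,
      vecMulVec_mul, mulVec_transpose, vecMulVec_smul, vecMulVec_neg, neg_smul]
    abel
  obtain ⟨T, hT, hTG⟩ := hP.inv.exists_lower_triangular_transpose_mul_mul_eq
    (hP.inv.transpose_one_sub_vecMulVec_mul_mul_add_smul_vecMulVec (ρ • u) τ hρ)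
  set A := P⁻¹ * ((T - K) * L)
  have hA : P * A + K * L = T * L := by
    rw [mul_nonsing_inv_cancel_left P _ hPdet, Matrix.sub_mul, sub_add_cancel]
  refine ⟨A, fun j hj i => by simp [A, mul_apply, hj], fun i j hij => ?_, ?_⟩
  · rw [show P * A + vecMulVec u b = T * L - L by rw [← hA, hKL]; abel, sub_apply,
      hT.mul_apply_eq_zero_of_le hL hij, hL i j hij, sub_zero]
  · have hTL : (T * L)ᵀ * P⁻¹ * (T * L) = Lᵀ * (Tᵀ * P⁻¹ * T) * L := by
      simp only [transpose_mul, Matrix.mul_assoc]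
    have hKL' : (K * L)ᵀ * P⁻¹ * (K * L) = Lᵀ * (Kᵀ * P⁻¹ * K) * L := by
      simp only [transpose_mul, Matrix.mul_assoc]
    have hsq := complete_square_of_mul_add_eq hPT hPdet hA
    rw [hTL, hKL', hTG, Matrix.mul_add, Matrix.add_mul, add_sub_cancel_left, hKL, Matrix.mul_add,
      transpose_add, Matrix.add_mul, transpose_vecMulVec] at hsq
    calc _ = Aᵀ * P * A + (Aᵀ * L + Aᵀ * vecMulVec u b) + (Lᵀ * A + vecMulVec b u * A) := by abel
      _ = _ := hsq
      _ = _ := by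
        simp only [hb, Matrix.mul_smul, Matrix.smul_mul, mul_vecMulVec, vecMulVec_mul,
          mulVec_transpose, smul_vecMulVec, vecMulVec_smul, smul_smul]
        congr 1
        field_simp

end

end Matrix

theorem Fin.dite_lt_pred_castLE_eq_self {α : Type*} [Zero α] {m : ℕ} (v : Fin m → α)
    (hv : ∀ j : Fin m, ¬(j : ℕ) < m - 1 → v j = 0) :
    (fun j : Fin m => if h : (j : ℕ) < m - 1 then v (Fin.castLE (Nat.sub_le m 1) ⟨j, h⟩) else 0)
      = v := by
  funext j
  split_ifs with h
  · rfl
  · exact (hv j h).symm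

theorem Matrix.of_dite_lt_pred_castLE_eq_self {κ α : Type*} [Zero α] {m : ℕ}
    (M : Matrix κ (Fin m) α) (hM : ∀ j : Fin m, ¬(j : ℕ) < m - 1 → ∀ i, M i j = 0) :
    (of fun i (j : Fin m) =>
      if h : (j : ℕ) < m - 1 then M i (Fin.castLE (Nat.sub_le m 1) ⟨j, h⟩) else 0) = M := by
  ext i j
  exact congrFun (Fin.dite_lt_pred_castLE_eq_self (M i) fun j hj => hM j hj i) j

theorem agg_bfgs_key_equations_solvable_general (n m : ℕ)
    (W : Matrix (Fin n) (Fin n) ℝ) (hW : W.PosDef)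
    (S Y : Matrix (Fin n) (Fin m) ℝ)
    (hS : LinearIndependent ℝ (fun j : Fin m => fun i : Fin n => S i j))
    (s0 y0 : Fin n → ℝ) (h0 : 0 < s0 ⬝ᵥ y0)
    (τ : Fin m → ℝ) :
    ∃ (A : Matrix (Fin m) (Fin (m - 1)) ℝ) (b : Fin (m - 1) → ℝ),
      -- ρ₀ and χ₀
      let ρ0 : ℝ := 1 / (s0 ⬝ᵥ y0)
      let χ0 : ℝ := 1 + ρ0 * (y0 ⬝ᵥ (W *ᵥ y0))
      -- [A 0] ∈ ℝ^{m×m}: A with a zero column appended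
      let A0 : Matrix (Fin m) (Fin m) ℝ :=
        Matrix.of fun i j => if h : (j : ℕ) < m - 1 then A i ⟨(j : ℕ), h⟩ else 0
      -- [b; 0] ∈ ℝ^m: b with a zero entry appended
      let b0 : Fin m → ℝ := fun j => if h : (j : ℕ) < m - 1 then b ⟨(j : ℕ), h⟩ else 0
      -- Ỹ := W⁻¹ S [A 0] + y₀ [bᵀ 0] + Y
      let Yt : Matrix (Fin n) (Fin m) ℝ := W⁻¹ * S * A0 + Matrix.vecMulVec y0 b0 + Y
      -- R and R̃
      let R : Matrix (Fin m) (Fin m) ℝ :=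
        Matrix.of fun i j => if i ≤ j then (Sᵀ * Y) i j else 0
      let Rt : Matrix (Fin m) (Fin m) ℝ :=
        Matrix.of fun i j => if i ≤ j then (Sᵀ * Yt) i j else 0
      -- (a) R̃ = R
      Rt = R ∧
      -- (b) [b; 0] = −ρ₀ (Sᵀ Y − R)ᵀ τ
      b0 = (-ρ0) • ((Sᵀ * Y - R)ᵀ *ᵥ τ) ∧
      -- (c) (Ỹ − Y)ᵀ W (Ỹ − Y) = (χ₀/ρ₀)[b;0][b;0]ᵀ − [A 0]ᵀ(SᵀY − R) − (SᵀY − R)ᵀ[A 0]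
      (Yt - Y)ᵀ * W * (Yt - Y) =
        (χ0 / ρ0) • Matrix.vecMulVec b0 b0
          - A0ᵀ * (Sᵀ * Y - R) - (Sᵀ * Y - R)ᵀ * A0 := by
  set P := Sᵀ * W⁻¹ * S
  have hP : P.PosDef := by
    simpa using hW.inv.conjTranspose_mul_mul_same (mulVec_injective_iff.mpr hS)
  set L : Matrix (Fin m) (Fin m) ℝ := Sᵀ * Y - of fun i j => if i ≤ j then (Sᵀ * Y) i j else 0
  have hL : ∀ i j, i ≤ j → L i j = 0 := fun i j h => by simp [L, h]
  have hL_last : ∀ j : Fin m, ¬(j : ℕ) < m - 1 → ∀ i, L i j = 0 :=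
    fun j hj i => hL i j (Fin.le_def.mpr (by omega))
  set b := (-(1 / (s0 ⬝ᵥ y0))) • (Lᵀ *ᵥ τ)
  obtain ⟨A, hA_last, hA_upper, hA_quad⟩ :=
    hP.exists_key_equations hL (Sᵀ *ᵥ y0) τ (one_div_pos.mpr h0) (b := b) rfl
  refine ⟨of fun i k => A i (Fin.castLE (Nat.sub_le m 1) k),
    fun k => b (Fin.castLE (Nat.sub_le m 1) k), ?_⟩
  intro ρ0 χ0 A0 b0 Yt R Rt
  have hA0 : A0 = A := of_dite_lt_pred_castLE_eq_self A fun j hj => hA_last j (hL_last j hj)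
  have hb0 : b0 = b := Fin.dite_lt_pred_castLE_eq_self b fun j hj => by
    simp [b, mulVec, dotProduct, hL_last j hj]
  have hYt : Yt - Y = W⁻¹ * S * A + vecMulVec y0 b := by
    simp only [Yt, hA0, hb0, add_sub_cancel_right]
  have hSYt : Sᵀ * (Yt - Y) = P * A + vecMulVec (Sᵀ *ᵥ y0) b := by
    rw [hYt, Matrix.mul_add, mul_vecMulVec]
    simp only [P, Matrix.mul_assoc]
  show Rt = R ∧ b0 = (-ρ0) • (Lᵀ *ᵥ τ) ∧
    (Yt - Y)ᵀ * W * (Yt - Y) = (χ0 / ρ0) • vecMulVec b0 b0 - A0ᵀ * L - Lᵀ * A0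
  refine ⟨?_, hb0, ?_⟩
  · ext i j
    simp only [Rt, R, of_apply]
    split_ifs with hij
    · rw [← sub_eq_zero, ← Matrix.sub_apply, ← Matrix.mul_sub, hSYt, hA_upper i j hij]
    · rfl
  · have hχ : χ0 / ρ0 = (1 / (s0 ⬝ᵥ y0))⁻¹ + y0 ⬝ᵥ W *ᵥ y0 := by
      simp only [χ0, ρ0]
      field_simp
    rw [hYt, transpose_mul_mul_inv_mul_add_vecMulVec (by simpa using hW.isHermitian.eq)
      hW.det_pos.ne'.isUnit, hA0, hb0, hχ, add_smul, ← hA_quad]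
    abel

theorem agg_bfgs_key_equations_solvable (n m : ℕ) (hm : 1 ≤ m)
    (W : Matrix (Fin n) (Fin n) ℝ) (hW : W.PosDef)
    (S Y : Matrix (Fin n) (Fin m) ℝ)
    (hS : LinearIndependent ℝ (fun j : Fin m => fun i : Fin n => S i j))
    (hpos : ∀ i : Fin m, 0 < (Sᵀ * Y) i i)
    (s0 y0 : Fin n → ℝ) (h0 : 0 < s0 ⬝ᵥ y0)
    (τ : Fin m → ℝ) (hs0 : s0 = S *ᵥ τ) :
    ∃ (A : Matrix (Fin m) (Fin (m - 1)) ℝ) (b : Fin (m - 1) → ℝ),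
      -- ρ₀ and χ₀
      let ρ0 : ℝ := 1 / (s0 ⬝ᵥ y0)
      let χ0 : ℝ := 1 + ρ0 * (y0 ⬝ᵥ (W *ᵥ y0))
      -- [A 0] ∈ ℝ^{m×m}: A with a zero column appended
      let A0 : Matrix (Fin m) (Fin m) ℝ :=
        Matrix.of fun i j => if h : (j : ℕ) < m - 1 then A i ⟨(j : ℕ), h⟩ else 0
      -- [b; 0] ∈ ℝ^m: b with a zero entry appended
      let b0 : Fin m → ℝ := fun j => if h : (j : ℕ) < m - 1 then b ⟨(j : ℕ), h⟩ else 0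
      -- Ỹ := W⁻¹ S [A 0] + y₀ [bᵀ 0] + Y
      let Yt : Matrix (Fin n) (Fin m) ℝ := W⁻¹ * S * A0 + Matrix.vecMulVec y0 b0 + Y
      -- R and R̃
      let R : Matrix (Fin m) (Fin m) ℝ :=
        Matrix.of fun i j => if i ≤ j then (Sᵀ * Y) i j else 0
      let Rt : Matrix (Fin m) (Fin m) ℝ :=
        Matrix.of fun i j => if i ≤ j then (Sᵀ * Yt) i j else 0
      -- (a) R̃ = R
      Rt = R ∧
      -- (b) [b; 0] = −ρ₀ (Sᵀ Y − R)ᵀ τ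
      b0 = (-ρ0) • ((Sᵀ * Y - R)ᵀ *ᵥ τ) ∧
      -- (c) (Ỹ − Y)ᵀ W (Ỹ − Y) = (χ₀/ρ₀)[b;0][b;0]ᵀ − [A 0]ᵀ(SᵀY − R) − (SᵀY − R)ᵀ[A 0]
      (Yt - Y)ᵀ * W * (Yt - Y) =
        (χ0 / ρ0) • Matrix.vecMulVec b0 b0
          - A0ᵀ * (Sᵀ * Y - R) - (Sᵀ * Y - R)ᵀ * A0 :=
  agg_bfgs_key_equations_solvable_general n m W hW S Y hS s0 y0 h0 τ
end

section
/- Let i ≥ 1 and let v_0, v_1, …, v_i ∈ ℝⁿ. Suppose that the Gram matrix G := [v_0 v_1 ⋯ v_i]^T [v_0 v_1 ⋯ v_i] ∈ ℝ^{(i+1)×(i+1)} admits the factorization G = [Ξ 0; ξ^T 0] [Ξ^T ξ; 0 0], where Ξ ∈ ℝ^{i×i} is lower triangular with strictly positive diagonal entries and ξ ∈ ℝ^i. Let τ ∈ ℝ^i be the unique solution of Ξ^T τ = ξ. Then v_i = [v_0 v_1 ⋯ v_{i−1}] τ, i.e., v_i lies in the span of v_0, …, v_{i−1} with coefficient vector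 τ; moreover, if v_1, …, v_i are linearly independent, then the first component of τ is nonzero. -/
open Matrix

theorem cholesky_breakdown_dependence (n i : ℕ) (hi : 1 ≤ i)
    (v : Fin (i + 1) → Fin n → ℝ)
    (Ξ : Matrix (Fin i) (Fin i) ℝ)
    (hlow : ∀ a b : Fin i, a < b → Ξ a b = 0)
    (hdiag : ∀ a : Fin i, 0 < Ξ a a)
    (ξ : Fin i → ℝ)
    -- T is the (i+1)×(i+1) block matrix [Ξ 0; ξᵀ 0]
    (T : Matrix (Fin (i + 1)) (Fin (i + 1)) ℝ)
    (hT : T = Matrix.of fun a b : Fin (i + 1) =>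
      if ha : (a : ℕ) < i then
        (if hb : (b : ℕ) < i then Ξ ⟨(a : ℕ), ha⟩ ⟨(b : ℕ), hb⟩ else 0)
      else
        (if hb : (b : ℕ) < i then ξ ⟨(b : ℕ), hb⟩ else 0))
    -- the Gram matrix of v₀, …, vᵢ factors as T Tᵀ
    (hfact : (Matrix.of fun a b : Fin (i + 1) => v a ⬝ᵥ v b) = T * Tᵀ)
    (τ : Fin i → ℝ) (hτ : Ξᵀ *ᵥ τ = ξ) :
    v (Fin.last i) = ∑ t : Fin i, τ t • v t.castSucc ∧
      (LinearIndependent ℝ (fun t : Fin i => v t.succ) → τ ⟨0, hi⟩ ≠ 0) := by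
  classical
  set u : Fin (i + 1) → ℝ := fun a => if h : (a : ℕ) < i then -τ ⟨a, h⟩ else 1 with hu
  -- Tᵀ *ᵥ u = 0
  have hTu : Tᵀ *ᵥ u = 0 := by
    funext b
    simp only [mulVec, transpose_apply, dotProduct, hT, of_apply, Pi.zero_apply]
    by_cases hb : (b : ℕ) < i
    · rw [Fin.sum_univ_castSucc]
      have hlast : ¬ ((Fin.last i : Fin (i+1)) : ℕ) < i := by simp
      have hξb : ∑ t : Fin i, Ξ t ⟨b, hb⟩ * τ t = ξ ⟨b, hb⟩ := by
        have := congrFun hτ ⟨b, hb⟩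
        simpa [mulVec, dotProduct, transpose_apply] using this
      simp only [Fin.coe_castSucc, Fin.is_lt, dif_pos, hb, hlast, dif_neg, hu,
        Fin.eta, mul_one]
      rw [← hξb]
      simp [mul_comm, Finset.sum_neg_distrib]
    · simp [hb]
  have hG : (Matrix.of fun a b : Fin (i + 1) => v a ⬝ᵥ v b) *ᵥ u = 0 := by
    rw [hfact, ← mulVec_mulVec, hTu, mulVec_zero]
  set w : Fin n → ℝ := fun j => ∑ a, u a * v a j with hw
  have hvw : ∀ a, v a ⬝ᵥ w = 0 := by
    intro a
    have h1 : v a ⬝ᵥ w = ∑ b, (v a ⬝ᵥ v b) * u b := by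
      simp only [dotProduct, hw, Finset.mul_sum, Finset.sum_mul]
      rw [Finset.sum_comm]
      exact Finset.sum_congr rfl fun b _ => Finset.sum_congr rfl fun j _ => by ring
    have h2 := congrFun hG a
    simp only [mulVec, dotProduct, of_apply, Pi.zero_apply] at h2
    rw [h1]
    simpa [dotProduct] using h2
  have hww : w ⬝ᵥ w = 0 := by
    have h1 : w ⬝ᵥ w = ∑ b, u b * (v b ⬝ᵥ w) := by
      have hterm : ∀ j, w j * w j = ∑ b, u b * (v b j * w j) := by
        intro j
        rw [show w j * w j = (∑ a, u a * v a j) * w j from rfl, Finset.sum_mul]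
        exact Finset.sum_congr rfl fun b _ => by ring
      simp only [dotProduct, hterm, Finset.mul_sum]
      exact Finset.sum_comm
    rw [h1]
    simp [hvw]
  have hw0 : w = 0 := by
    rwa [dotProduct_self_eq_zero] at hww
  have key : v (Fin.last i) = ∑ t : Fin i, τ t • v t.castSucc := by
    funext j
    have h0 : ∑ a, u a * v a j = 0 := congrFun hw0 j
    rw [Fin.sum_univ_castSucc] at h0
    have hlast : ¬ ((Fin.last i : Fin (i+1)) : ℕ) < i := by simp
    simp only [hu, Fin.coe_castSucc, Fin.is_lt, dif_pos, hlast, dif_neg, Fin.eta,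
      one_mul, neg_mul, dite_false] at h0
    have hs : -∑ t : Fin i, τ t * v t.castSucc j + v (Fin.last i) j = 0 := by
      rw [Finset.sum_neg_distrib] at h0
      convert h0 using 2
    have hthis : v (Fin.last i) j = ∑ t : Fin i, τ t * v t.castSucc j := by linarith
    simpa [Finset.sum_apply, Pi.smul_apply, smul_eq_mul] using hthis
  refine ⟨key, ?_⟩
  intro hli hτ0
  have hsum : ∑ a : Fin (i + 1), u a • v a = 0 := by
    funext j
    have := congrFun hw0 j
    simpa [hw, Finset.sum_apply] using this
  rw [Fin.sum_univ_succ] at hsum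
  have hu0 : u 0 = 0 := by
    have h0i : ((0 : Fin (i+1)) : ℕ) < i := hi
    simp only [hu, h0i, dif_pos]
    simpa using hτ0
  rw [hu0, zero_smul, zero_add] at hsum
  have hlt : i - 1 < i := by omega
  have hkey := Fintype.linearIndependent_iff.mp hli (fun s => u s.succ) hsum ⟨i - 1, hlt⟩
  have hge : ¬ (((⟨i - 1, hlt⟩ : Fin i).succ : Fin (i+1)) : ℕ) < i := by
    simp only [Fin.val_succ]
    omega
  rw [hu] at hkey
  simp only [dif_neg hge] at hkey
  exact one_ne_zero hkey
end

section
/- Let m ≥ 3, let ℓ ∈ {1, …, m−2}, and let L ∈ ℝ^{m×m} be invertible. For each t ∈ {ℓ+1, …, m−1}, let ψ_t ∈ ℝ^{m−ℓ−1} and define φ_t := L [0_{ℓ+1}; ψ_t] ∈ ℝ^m, where [0_{ℓ+1}; ψ_t] denotes the vector whose first ℓ+1 components are zero and whose remaining m−ℓ−1 components are ψ_t. Let z_ℓ, z_{ℓ+1}, …, z_{m−1} ∈ ℝ^{m−1} be such that φ_i^T φ_j = z_i^T z_j for all ℓ+1 ≤ i ≤ j ≤ m−1. Then there exists v ∈ ℝ^{m−ℓ}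 such that the vector φ_ℓ := L [0_ℓ; v] ∈ ℝ^m (whose first ℓ components before applying L are zero) satisfies φ_t^T φ_ℓ = z_t^T z_ℓ for all t ∈ {ℓ+1, …, m−1} and φ_ℓ^T φ_ℓ = z_ℓ^T z_ℓ. -/
/-!
The Gram matrices of the `φ_t` and of the `z_t` agree, so a linear combination of the `z_t` and
the same combination of the `φ_t` have the same inner products with every `φ_t`, resp. `z_t`, and
the same norm. Transporting the orthogonal projection of `z_ℓ` onto `span {z_t}` this way gives a
vector `p` with the required inner products and `‖p‖ ≤ ‖z_ℓ‖`. All `φ_t` lie in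
`W = L [0_ℓ; ℝ^{m-ℓ}]`, which has dimension `m - ℓ` while there are only `m - ℓ - 1` of them, so
`W` contains a vector orthogonal to all of them of length `√(‖z_ℓ‖² - ‖p‖²)`; adding it to `p`
corrects the norm.
-/

open Matrix
open scoped RealInnerProductSpace

/-- `pad m j u` is the vector in `ℝ^m` whose first `j` components are zero and whose
last `m − j` components are those of `u`. -/
def pad (m j : ℕ) (u : Fin (m - j) → ℝ) : Fin m → ℝ := fun a =>
  if h : j ≤ (a : ℕ) then u ⟨(a : ℕ) - j, by have := a.isLt; omega⟩ else 0

section GramMatrix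

open Module Submodule Set

variable {ι E F : Type*} [Fintype ι]
  [NormedAddCommGroup E] [InnerProductSpace ℝ E] [NormedAddCommGroup F] [InnerProductSpace ℝ F]
  {Φ : ι → E} {Z : ι → F}

theorem inner_sum_smul_eq_of_inner_eq (hG : ∀ i j, ⟪Φ i, Φ j⟫ = ⟪Z i, Z j⟫) (c : ι → ℝ)
    (k : ι) : ⟪Φ k, ∑ i, c i • Φ i⟫ = ⟪Z k, ∑ i, c i • Z i⟫ := by
  simp only [inner_sum, real_inner_smul_right, hG]

theorem norm_sum_smul_eq_of_inner_eq (hG : ∀ i j, ⟪Φ i, Φ j⟫ = ⟪Z i, Z j⟫) (c : ι → ℝ) :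
    ‖∑ i, c i • Φ i‖ = ‖∑ i, c i • Z i‖ := by
  rw [← sq_eq_sq₀ (norm_nonneg _) (norm_nonneg _), ← real_inner_self_eq_norm_sq,
    ← real_inner_self_eq_norm_sq]
  simp only [sum_inner, real_inner_smul_left, inner_sum_smul_eq_of_inner_eq hG]

theorem exists_mem_span_inner_eq_of_inner_eq (hG : ∀ i j, ⟪Φ i, Φ j⟫ = ⟪Z i, Z j⟫) (y : F) :
    ∃ p ∈ span ℝ (range Φ), (∀ i, ⟪Φ i, p⟫ = ⟪Z i, y⟫) ∧ ‖p‖ ≤ ‖y‖ := by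
  set V := span ℝ (range Z)
  have : FiniteDimensional ℝ V := FiniteDimensional.span_of_finite ℝ (finite_range Z)
  obtain ⟨c, hc⟩ := (mem_span_range_iff_exists_fun ℝ).mp (V.starProjection_apply_mem y)
  refine ⟨∑ i, c i • Φ i, sum_mem fun i _ => smul_mem _ _ (subset_span (mem_range_self i)),
    fun k => ?_, ?_⟩
  · rw [inner_sum_smul_eq_of_inner_eq hG, hc, ← inner_starProjection_left_eq_right,
      starProjection_eq_self_iff.mpr (subset_span (mem_range_self k))]
  · rw [norm_sum_smul_eq_of_inner_eq hG, hc]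
    exact V.norm_starProjection_apply_le y

theorem exists_mem_orthogonal_inf_norm_eq {K W : Submodule ℝ E} (hKW : K ≤ W)
    (hlt : finrank ℝ K < finrank ℝ W) {r : ℝ} (hr : 0 ≤ r) : ∃ w ∈ Kᗮ ⊓ W, ‖w‖ = r := by
  have : FiniteDimensional ℝ W := Module.finite_of_finrank_pos (by omega)
  have hpos : 0 < finrank ℝ ↥(Kᗮ ⊓ W) := by
    have := finrank_add_inf_finrank_orthogonal hKW
    omega
  obtain ⟨w, hw⟩ := Module.finrank_pos_iff_exists_ne_zero.mp hpos
  have hw' : ‖(w : E)‖ ≠ 0 := by simpa using hw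
  refine ⟨(r / ‖(w : E)‖) • (w : E), smul_mem _ _ w.2, ?_⟩
  rw [norm_smul, Real.norm_eq_abs, abs_of_nonneg (by positivity), div_mul_cancel₀ _ hw']

theorem exists_mem_inner_eq_and_norm_eq_of_inner_eq
    (hG : ∀ i j, ⟪Φ i, Φ j⟫ = ⟪Z i, Z j⟫) {W : Submodule ℝ E} (hΦW : ∀ i, Φ i ∈ W)
    (hcard : Fintype.card ι < finrank ℝ W) (y : F) :
    ∃ q ∈ W, (∀ i, ⟪Φ i, q⟫ = ⟪Z i, y⟫) ∧ ‖q‖ = ‖y‖ := by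
  obtain ⟨p, hpK, hpΦ, hpy⟩ := exists_mem_span_inner_eq_of_inner_eq hG y
  have hKW : span ℝ (range Φ) ≤ W := span_le.mpr (range_subset_iff.mpr hΦW)
  obtain ⟨w, ⟨hwK, hwW⟩, hw⟩ := exists_mem_orthogonal_inf_norm_eq hKW
    ((finrank_range_le_card Φ).trans_lt hcard) (Real.sqrt_nonneg (‖y‖ * ‖y‖ - ‖p‖ * ‖p‖))
  refine ⟨p + w, W.add_mem (hKW hpK) hwW, fun i => ?_, ?_⟩
  · rw [inner_add_right, hpΦ,
      inner_right_of_mem_orthogonal (subset_span (mem_range_self i)) hwK, add_zero]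
  · refine (mul_self_inj (norm_nonneg _) (norm_nonneg _)).mp ?_
    rw [norm_add_sq_eq_norm_sq_add_norm_sq_real (inner_right_of_mem_orthogonal hpK hwK), hw,
      Real.mul_self_sqrt (sub_nonneg.mpr (mul_self_le_mul_self (norm_nonneg p) hpy))]
    ring

end GramMatrix

theorem pad_apply_add (m j : ℕ) (u : Fin (m - j) → ℝ) (b : Fin (m - j)) :
    pad m j u ⟨j + b, by omega⟩ = u b := by
  simp [pad]

theorem pad_injective (m j : ℕ) : Function.Injective (pad m j) := fun u u' h =>
  funext fun b => by rw [← pad_apply_add m j u, ← pad_apply_add m j u', h]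

theorem pad_pad (m ℓ : ℕ) (u : Fin (m - (ℓ + 1)) → ℝ) :
    pad m ℓ (pad (m - ℓ) 1 u) = pad m (ℓ + 1) u := by
  funext a
  simp only [pad]
  by_cases h : ℓ + 1 ≤ (a : ℕ)
  · rw [dif_pos (by omega), dif_pos h, dif_pos (by omega)]
    congr 2
  · rw [dif_neg h]
    split_ifs <;> first | rfl | omega

def padLinearMap (m j : ℕ) : (Fin (m - j) → ℝ) →ₗ[ℝ] Fin m → ℝ where
  toFun := pad m j
  map_add' u v := by funext a; simp only [pad, Pi.add_apply]; split <;> simp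
  map_smul' c u := by funext a; simp only [pad, Pi.smul_apply, smul_eq_mul]; split <;> simp

theorem EuclideanSpace.real_inner_toLp_toLp {n : Type*} [Fintype n] (x y : n → ℝ) :
    ⟪WithLp.toLp 2 x, WithLp.toLp 2 y⟫ = x ⬝ᵥ y := by
  rw [EuclideanSpace.inner_toLp_toLp, star_trivial, dotProduct_comm]

theorem exists_affine_quadratic_solution_general (m ℓ : ℕ)
    (hℓ1 : 1 ≤ ℓ) (hℓ2 : ℓ ≤ m - 2)
    (L : Matrix (Fin m) (Fin m) ℝ) (hL : IsUnit L)
    (ψ : ℕ → Fin (m - (ℓ + 1)) → ℝ)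
    (z : ℕ → Fin (m - 1) → ℝ)
    (hinner : ∀ i j : ℕ, ℓ + 1 ≤ i → i ≤ j → j ≤ m - 1 →
      (L *ᵥ pad m (ℓ + 1) (ψ i)) ⬝ᵥ (L *ᵥ pad m (ℓ + 1) (ψ j)) = z i ⬝ᵥ z j) :
    ∃ v : Fin (m - ℓ) → ℝ,
      (∀ t : ℕ, ℓ + 1 ≤ t → t ≤ m - 1 →
        (L *ᵥ pad m (ℓ + 1) (ψ t)) ⬝ᵥ (L *ᵥ pad m ℓ v) = z t ⬝ᵥ z ℓ) ∧
      (L *ᵥ pad m ℓ v) ⬝ᵥ (L *ᵥ pad m ℓ v) = z ℓ ⬝ᵥ z ℓ := by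
  let T : (Fin (m - ℓ) → ℝ) →ₗ[ℝ] EuclideanSpace ℝ (Fin m) :=
    (WithLp.linearEquiv 2 ℝ (Fin m → ℝ)).symm.toLinearMap ∘ₗ L.mulVecLin ∘ₗ padLinearMap m ℓ
  have hT (u) : T u = WithLp.toLp 2 (L *ᵥ pad m ℓ u) := rfl
  have hTinj : Function.Injective T :=
    (WithLp.toLp_injective 2).comp ((mulVec_injective_iff_isUnit.2 hL).comp (pad_injective m ℓ))
  let ι := Finset.Icc (ℓ + 1) (m - 1)
  let Φ (t : ι) : EuclideanSpace ℝ (Fin m) := T (pad (m - ℓ) 1 (ψ t))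
  have hΦ (t : ι) : Φ t = WithLp.toLp 2 (L *ᵥ pad m (ℓ + 1) (ψ t)) := by
    rw [← pad_pad, ← hT]
  have hG (i j : ι) : ⟪Φ i, Φ j⟫ = ⟪WithLp.toLp 2 (z i), WithLp.toLp 2 (z j)⟫ := by
    have hi := Finset.mem_Icc.mp i.2
    have hj := Finset.mem_Icc.mp j.2
    rw [hΦ, hΦ, EuclideanSpace.real_inner_toLp_toLp, EuclideanSpace.real_inner_toLp_toLp]
    rcases le_total (i : ℕ) j with h | h
    · exact hinner _ _ hi.1 h hj.2
    · rw [dotProduct_comm, dotProduct_comm (z i)]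
      exact hinner _ _ hj.1 h hi.2
  have hcard : Fintype.card ι < Module.finrank ℝ (LinearMap.range T) := by
    rw [Fintype.card_coe, Nat.card_Icc, LinearMap.finrank_range_of_inj hTinj,
      Module.finrank_fin_fun]
    omega
  obtain ⟨_, ⟨v, rfl⟩, hvΦ, hvz⟩ := exists_mem_inner_eq_and_norm_eq_of_inner_eq hG
    (fun t => LinearMap.mem_range_self T _) hcard (WithLp.toLp 2 (z ℓ))
  refine ⟨v, fun t ht1 ht2 => ?_, ?_⟩
  · simpa only [hΦ, hT, EuclideanSpace.real_inner_toLp_toLp] using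
      hvΦ ⟨t, Finset.mem_Icc.mpr ⟨ht1, ht2⟩⟩
  · rw [← EuclideanSpace.real_inner_toLp_toLp, ← EuclideanSpace.real_inner_toLp_toLp, ← hT,
      real_inner_self_eq_norm_sq, real_inner_self_eq_norm_sq, hvz]

theorem exists_affine_quadratic_solution (m ℓ : ℕ) (hm : 3 ≤ m)
    (hℓ1 : 1 ≤ ℓ) (hℓ2 : ℓ ≤ m - 2)
    (L : Matrix (Fin m) (Fin m) ℝ) (hL : IsUnit L)
    (ψ : ℕ → Fin (m - (ℓ + 1)) → ℝ)
    (z : ℕ → Fin (m - 1) → ℝ)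
    (hinner : ∀ i j : ℕ, ℓ + 1 ≤ i → i ≤ j → j ≤ m - 1 →
      (L *ᵥ pad m (ℓ + 1) (ψ i)) ⬝ᵥ (L *ᵥ pad m (ℓ + 1) (ψ j)) = z i ⬝ᵥ z j) :
    ∃ v : Fin (m - ℓ) → ℝ,
      (∀ t : ℕ, ℓ + 1 ≤ t → t ≤ m - 1 →
        (L *ᵥ pad m (ℓ + 1) (ψ t)) ⬝ᵥ (L *ᵥ pad m ℓ v) = z t ⬝ᵥ z ℓ) ∧
      (L *ᵥ pad m ℓ v) ⬝ᵥ (L *ᵥ pad m ℓ v) = z ℓ ⬝ᵥ z ℓ :=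
  exists_affine_quadratic_solution_general m ℓ hℓ1 hℓ2 L hL ψ z hinner
end
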